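/- arXiv:1507.02384 — 6 statements merged into one kernel-verified Lean document; each statement's English description precedes it below -/
import Mathlib

section
/- Every finite simple bipartite graph G with bipartition (A,B) has a minimum vertex cover C such that every minimum vertex cover C' of G satisfies A ∩ C' ⊆ A ∩ C and B ∩ C ⊆ B ∩ C'. -/
open SimpleGraph

/-- A vertex cover of a graph: a set of vertices containing at least one endpoint
of every edge. -/
def IsVertexCover {V : Type} (G : SimpleGraph V) (C : Set V) : Prop :=
  ∀ ⦃u v : V⦄, G.Adj u v → u ∈ C ∨ v ∈ C

/-- A minimum vertex cover: a vertex cover of smallest cardinality. -/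
def IsMinVertexCover {V : Type} (G : SimpleGraph V) (C : Set V) : Prop :=
  _root_.IsVertexCover G C ∧ ∀ C' : Set V, _root_.IsVertexCover G C' → C.ncard ≤ C'.ncard

/-- `(A, B)` is a bipartition of `G`: `A` and `B` are disjoint, cover all vertices,
and every edge joins a vertex of `A` to a vertex of `B`. -/
def IsBipartition {V : Type} (G : SimpleGraph V) (A B : Set V) : Prop :=
  Disjoint A B ∧ A ∪ B = Set.univ ∧
    ∀ ⦃u v : V⦄, G.Adj u v → (u ∈ A ∧ v ∈ B) ∨ (u ∈ B ∧ v ∈ A)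

/-- A matching of `G`: a set of edges of `G` that are pairwise vertex-disjoint. -/
def IsMatching' {V : Type} (G : SimpleGraph V) (M : Set (Sym2 V)) : Prop :=
  M ⊆ G.edgeSet ∧ ∀ e ∈ M, ∀ f ∈ M, e ≠ f → ∀ v : V, ¬ (v ∈ e ∧ v ∈ f)

/-- A maximum matching: a matching of largest cardinality. -/
def IsMaxMatching {V : Type} (G : SimpleGraph V) (M : Set (Sym2 V)) : Prop :=
  IsMatching' G M ∧ ∀ M' : Set (Sym2 V), IsMatching' G M' → M'.ncard ≤ M.ncard

/-- A vertex is `M`-saturated if it is an endpoint of some edge of `M`. -/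
def MSaturated {V : Type} (M : Set (Sym2 V)) (v : V) : Prop :=
  ∃ e ∈ M, v ∈ e

/-- A list of edges is `M`-alternating if consecutive edges alternate between
membership and non-membership in `M`. -/
def AlternatingEdges {V : Type} (M : Set (Sym2 V)) (l : List (Sym2 V)) : Prop :=
  List.Chain' (fun e f => (e ∈ M ↔ f ∉ M)) l

/-- The edge `e` lies on an `M`-alternating path starting at an `M`-unsaturated
vertex of `A`. -/
def OnAltPath {V : Type} (G : SimpleGraph V) (M : Set (Sym2 V)) (A : Set V)
    (e : Sym2 V) : Prop :=
  ∃ (a z : V) (p : G.Walk a z), a ∈ A ∧ ¬ MSaturated M a ∧ p.IsPath ∧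
    AlternatingEdges M p.edges ∧ e ∈ p.edges

/-- The `A`-König cover of `G` constructed from a maximum matching `M`: for each
edge `ab ∈ M` with `a ∈ A` and `b ∈ B`, put `b` into the cover if `ab` lies on an
`M`-alternating path starting at an `M`-unsaturated vertex of `A`, and otherwise
put `a` into the cover. -/
def koenigCoverFrom {V : Type} (G : SimpleGraph V) (M : Set (Sym2 V))
    (A B : Set V) : Set V :=
  {b | b ∈ B ∧ ∃ e ∈ M, b ∈ e ∧ OnAltPath G M A e} ∪
    {a | a ∈ A ∧ ∃ e ∈ M, a ∈ e ∧ ¬ OnAltPath G M A e}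

/-- `C` is the `A`-König cover of the bipartite graph `G` with bipartition `(A,B)`:
the unique minimum vertex cover such that every minimum vertex cover `C'`
satisfies `A ∩ C' ⊆ A ∩ C` and `B ∩ C ⊆ B ∩ C'`. -/
def IsKoenigCover {V : Type} (G : SimpleGraph V) (A B : Set V) (C : Set V) : Prop :=
  IsMinVertexCover G C ∧
    ∀ C' : Set V, IsMinVertexCover G C' → A ∩ C' ⊆ A ∩ C ∧ B ∩ C ⊆ B ∩ C'

/-- `G[S,T]`: the bipartite graph on the vertices of `G` whose edges are exactly
the edges of `G` with one endpoint in `S` and the other in `T`. -/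
def crossingGraph {V : Type} (G : SimpleGraph V) (S T : Set V) : SimpleGraph V where
  Adj u v := G.Adj u v ∧ ((u ∈ S ∧ v ∈ T) ∨ (u ∈ T ∧ v ∈ S))
  symm := ⟨fun u v h =>
    ⟨h.1.symm, h.2.elim (fun h' => Or.inr ⟨h'.2, h'.1⟩) (fun h' => Or.inl ⟨h'.2, h'.1⟩)⟩⟩
  loopless := ⟨fun u h => G.loopless.irrefl u h.1⟩

/-!
For minimum vertex covers `C`, `C'` of a bipartite graph, the "join" `A ∩ (C ∪ C') ∪ B ∩ (C ∩ C')`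
and the "meet" `A ∩ (C ∩ C') ∪ B ∩ (C ∪ C')` are again vertex covers, and their sizes add up to
`|C| + |C'|`, so both are minimum. Take `C` to be a minimum cover whose `A`-side is as large as
possible. Joining it with any minimum cover `C'` cannot enlarge its `A`-side, so `A ∩ C' ⊆ A ∩ C`;
the join then has `A`-side `A ∩ C` and `B`-side `B ∩ C ∩ C'`, and since it has size `|C|`,
`B ∩ C ⊆ C'`.
-/

variable {V : Type} {G : SimpleGraph V} {A B C C' : Set V}

/-- The join of `C` and `C'` in the lattice of vertex covers of a graph with bipartition `(A,B)`;
the meet is `coverJoin B A C C'`. -/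
def coverJoin (A B C C' : Set V) : Set V := A ∩ (C ∪ C') ∪ B ∩ (C ∩ C')

theorem inter_coverJoin_left (h : Disjoint A B) : A ∩ coverJoin A B C C' = A ∩ (C ∪ C') := by
  ext x
  have : x ∈ A → x ∉ B := fun hx => Set.disjoint_left.mp h hx
  simp only [coverJoin, Set.mem_inter_iff, Set.mem_union]
  tauto

theorem inter_coverJoin_right (h : Disjoint A B) : B ∩ coverJoin A B C C' = B ∩ (C ∩ C') := by
  ext x
  have : x ∈ A → x ∉ B := fun hx => Set.disjoint_left.mp h hx
  simp only [coverJoin, Set.mem_inter_iff, Set.mem_union]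
  tauto

theorem ncard_inter_union_add_ncard_inter_inter [Finite V] (S C C' : Set V) :
    (S ∩ (C ∪ C')).ncard + (S ∩ (C ∩ C')).ncard = (S ∩ C).ncard + (S ∩ C').ncard := by
  rw [Set.inter_union_distrib_left, Set.inter_inter_distrib_left]
  exact Set.ncard_union_add_ncard_inter _ _

theorem IsMinVertexCover.ncard_eq (hC : IsMinVertexCover G C) (hC' : IsMinVertexCover G C') :
    C.ncard = C'.ncard :=
  le_antisymm (hC.2 C' hC'.1) (hC'.2 C hC.1)

theorem exists_isMinVertexCover [Finite V] (G : SimpleGraph V) :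
    ∃ C, IsMinVertexCover G C := by
  obtain ⟨C, hC, hCmin⟩ := Set.Finite.exists_minimalFor Set.ncard
    {C : Set V | _root_.IsVertexCover G C} (Set.toFinite _) ⟨Set.univ, fun _ _ _ => Or.inl trivial⟩
  exact ⟨C, hC, fun C' hC' => not_lt.mp fun hlt => hlt.not_ge (hCmin hC' hlt.le)⟩

namespace IsBipartition

theorem symm (h : IsBipartition G A B) : IsBipartition G B A :=
  ⟨h.1.symm, Set.union_comm A B ▸ h.2.1, fun _ _ huv => (h.2.2 huv).symm⟩

theorem ncard_eq_add [Finite V] (h : IsBipartition G A B) (S : Set V) :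
    S.ncard = (A ∩ S).ncard + (B ∩ S).ncard := by
  conv_lhs => rw [← Set.univ_inter S, ← h.2.1, Set.union_inter_distrib_right]
  exact Set.ncard_union_eq (h.1.mono Set.inter_subset_left Set.inter_subset_left)

theorem isVertexCover_coverJoin (h : IsBipartition G A B) (hC : _root_.IsVertexCover G C)
    (hC' : _root_.IsVertexCover G C') : _root_.IsVertexCover G (coverJoin A B C C') := by
  intro _ _ huv
  have := hC huv
  have := hC' huv
  have := h.2.2 huv
  simp only [coverJoin, Set.mem_union, Set.mem_inter_iff]
  tauto

theorem ncard_coverJoin_add_ncard_coverJoin [Finite V] (h : IsBipartition G A B) (C C' : Set V) :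
    (coverJoin A B C C').ncard + (coverJoin B A C C').ncard = C.ncard + C'.ncard := by
  have hAB := h.1.mono (Set.inter_subset_left (t := C ∪ C')) (Set.inter_subset_left (t := C ∩ C'))
  have hBA := h.1.symm.mono (Set.inter_subset_left (t := C ∪ C'))
    (Set.inter_subset_left (t := C ∩ C'))
  rw [coverJoin, coverJoin, Set.ncard_union_eq hAB, Set.ncard_union_eq hBA, h.ncard_eq_add C,
    h.ncard_eq_add C']
  linarith [ncard_inter_union_add_ncard_inter_inter A C C',
    ncard_inter_union_add_ncard_inter_inter B C C']

theorem isMinVertexCover_coverJoin [Finite V] (h : IsBipartition G A B)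
    (hC : IsMinVertexCover G C) (hC' : IsMinVertexCover G C') :
    IsMinVertexCover G (coverJoin A B C C') := by
  have hJoin := h.isVertexCover_coverJoin hC.1 hC'.1
  have hMeet := h.symm.isVertexCover_coverJoin hC.1 hC'.1
  have hsum := h.ncard_coverJoin_add_ncard_coverJoin C C'
  have := hC.ncard_eq hC'
  have := hC.2 _ hJoin
  have := hC.2 _ hMeet
  refine ⟨hJoin, fun X hX => ?_⟩
  linarith [hC.2 X hX]

theorem inter_right_subset_of_inter_left_subset [Finite V] (h : IsBipartition G A B)
    (hC : IsMinVertexCover G C) (hC' : IsMinVertexCover G C') (hA : A ∩ C' ⊆ A ∩ C) :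
    B ∩ C ⊆ B ∩ C' := by
  have hJoinA : A ∩ coverJoin A B C C' = A ∩ C := by
    rw [inter_coverJoin_left h.1, Set.inter_union_distrib_left, Set.union_eq_left.mpr hA]
  have hJoin : (coverJoin A B C C').ncard = C.ncard :=
    (h.isMinVertexCover_coverJoin hC hC').ncard_eq hC
  rw [h.ncard_eq_add (coverJoin A B C C'), h.ncard_eq_add C, hJoinA, inter_coverJoin_right h.1]
    at hJoin
  have hBC : B ∩ (C ∩ C') = B ∩ C :=
    Set.eq_of_subset_of_ncard_le (Set.inter_subset_inter_right _ Set.inter_subset_left) (by omega)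
  rw [← hBC]
  exact Set.inter_subset_inter_right _ Set.inter_subset_right

theorem inter_left_subset_of_maximalFor [Finite V] (h : IsBipartition G A B)
    (hC : MaximalFor (IsMinVertexCover G) (fun C => (A ∩ C).ncard) C)
    (hC' : IsMinVertexCover G C') : A ∩ C' ⊆ A ∩ C := by
  have hJoinA := inter_coverJoin_left (C := C) (C' := C') h.1
  have hsub : A ∩ C ⊆ A ∩ coverJoin A B C C' :=
    hJoinA ▸ Set.inter_subset_inter_right _ Set.subset_union_left
  have hle := hC.2 (h.isMinVertexCover_coverJoin hC.1 hC') (Set.ncard_le_ncard hsub)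
  rw [Set.eq_of_subset_of_ncard_le hsub hle, hJoinA]
  exact Set.inter_subset_inter_right _ Set.subset_union_right

end IsBipartition

/-- Every finite bipartite graph `G` with bipartition `(A,B)` has
a minimum vertex cover `C` such that every minimum vertex cover `C'` satisfies
`A ∩ C' ⊆ A ∩ C` and `B ∩ C ⊆ B ∩ C'`. -/
theorem exists_koenigCover {V : Type} [Fintype V] (G : SimpleGraph V)
    (A B : Set V) (hbip : IsBipartition G A B) :
    ∃ C : Set V, IsMinVertexCover G C ∧
      ∀ C' : Set V, IsMinVertexCover G C' →
        A ∩ C' ⊆ A ∩ C ∧ B ∩ C ⊆ B ∩ C' := by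
  obtain ⟨C₀, hC₀⟩ := exists_isMinVertexCover G
  obtain ⟨C, hC⟩ := Set.Finite.exists_maximalFor (fun C => (A ∩ C).ncard)
    {C | IsMinVertexCover G C} (Set.toFinite _) ⟨C₀, hC₀⟩
  refine ⟨C, hC.1, fun C' hC' => ?_⟩
  have hA := hbip.inter_left_subset_of_maximalFor hC hC'
  exact ⟨hA, hbip.inter_right_subset_of_inter_left_subset hC.1 hC' hA⟩
end

section
/- Let G be a finite simple bipartite graph with bipartition (A,B), let M be a maximum matching of G, let C* be the A-König cover of G constructed from M, and let C' be any minimum vertex cover of G. Then A ∩ C' ⊆ A ∩ C*. -/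
open SimpleGraph

/-!
König's argument. The `A`-König cover `C*` is a vertex cover, since an uncovered edge would
extend an alternating path into an `M`-augmenting one, and it contains at most one endpoint of
each edge of `M` and nothing else. Hence a minimum cover `C'` has `|C'| ≤ |C*| ≤ |M|`, which
forces `C'` to consist of exactly one endpoint of each matching edge. Walking along an
`M`-alternating path from an unsaturated vertex of `A`, `C'` must then contain the `B`-end of
every non-matching edge and so miss the `A`-end of the following matching edge: `C'` avoids
every `A`-vertex of such a path. So a vertex of `A ∩ C'` is matched along an edge lying on no
such path, which is exactly how `C*` picks its vertices in `A`.
-/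

open scoped Classical

variable {V : Type} {G : SimpleGraph V} {A B : Set V} {M : Set (Sym2 V)}

theorem List.Nodup.ncard_setOf_mem_and {α : Type*} {l : List α} (hl : l.Nodup) (P : α → Prop)
    [DecidablePred P] : {a | a ∈ l ∧ P a}.ncard = l.countP (P ·) := by
  have hset : {a | a ∈ l ∧ P a} = ((l.filter (P ·)).toFinset : Set α) := by
    ext; simp
  rw [hset, Set.ncard_coe_finset, List.toFinset_card_of_nodup (hl.filter _),
    List.countP_eq_length_filter]

theorem List.Nodup.ncard_symmDiff_add_countP {α : Type*} {l : List α} (hl : l.Nodup)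
    {s : Set α} (hs : s.Finite) :
    (symmDiff s {a | a ∈ l}).ncard + l.countP (· ∈ s) = s.ncard + l.countP (· ∉ s) := by
  have hsplit : (symmDiff s {a | a ∈ l}).ncard =
      (s \ {a | a ∈ l}).ncard + {a | a ∈ l ∧ a ∉ s}.ncard :=
    Set.ncard_union_eq disjoint_sdiff_sdiff hs.sdiff (List.finite_toSet l).sdiff
  have hs' := Set.ncard_inter_add_ncard_sdiff_eq_ncard s {a | a ∈ l} hs
  have hinter : s ∩ {a | a ∈ l} = {a | a ∈ l ∧ a ∈ s} := Set.inter_comm _ _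
  rw [hinter, hl.ncard_setOf_mem_and] at hs'
  rw [hsplit, hl.ncard_setOf_mem_and]
  omega

theorem Set.ncard_le_ncard_of_forall_subsingleton {α β : Type*} {s : Set α} {t : Set β}
    (hs : s.Finite) (ht : t.Finite) (r : α → β → Prop) (hst : ∀ a ∈ s, ∃ b ∈ t, r a b)
    (hsub : ∀ b ∈ t, {a | a ∈ s ∧ r a b}.Subsingleton) : s.ncard ≤ t.ncard := by
  obtain ⟨s, rfl⟩ := hs.exists_finset_coe
  obtain ⟨t, rfl⟩ := ht.exists_finset_coe
  simp only [Set.ncard_coe_finset]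
  exact Finset.card_le_card_of_forall_subsingleton r hst hsub

namespace IsBipartition

theorem notMem_left_iff (hbip : IsBipartition G A B) {v : V} : v ∉ A ↔ v ∈ B := by
  have hv : v ∈ A ∪ B := hbip.2.1 ▸ Set.mem_univ v
  exact ⟨hv.resolve_left, fun hB hA => Set.disjoint_left.mp hbip.1 hA hB⟩

theorem mem_left_iff_of_adj (hbip : IsBipartition G A B) {u v : V} (h : G.Adj u v) :
    v ∈ A ↔ u ∉ A := by
  rcases hbip.2.2 h with ⟨hu, hv⟩ | ⟨hu, hv⟩
  · exact iff_of_false (hbip.notMem_left_iff.2 hv) (not_not.2 hu)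
  · exact iff_of_true hv (hbip.notMem_left_iff.2 hu)

end IsBipartition

theorem IsMatching'.eq_of_mem (hM : IsMatching' G M) {e f : Sym2 V} {v : V} (he : e ∈ M)
    (hf : f ∈ M) (hve : v ∈ e) (hvf : v ∈ f) : e = f :=
  by_contra fun hne => hM.2 e he f hf hne v ⟨hve, hvf⟩

theorem IsMatching'.ncard_le_ncard_of_forall_exists_mem [Finite V] (hM : IsMatching' G M)
    {T : Set V} (hT : ∀ e ∈ M, ∃ v ∈ T, v ∈ e) : M.ncard ≤ T.ncard :=
  Set.ncard_le_ncard_of_forall_subsingleton (Set.toFinite M) (Set.toFinite T) (fun e v => v ∈ e)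
    hT fun _ _ _ he _ hf => hM.eq_of_mem he.1 hf.1 he.2 hf.2

theorem IsVertexCover.exists_mem {C : Set V} (hC : _root_.IsVertexCover G C) {e : Sym2 V}
    (he : e ∈ G.edgeSet) : ∃ v ∈ C, v ∈ e := by
  induction e using Sym2.ind with
  | _ x y =>
    rcases hC he with hx | hy
    exacts [⟨x, hx, Sym2.mem_mk_left _ _⟩, ⟨y, hy, Sym2.mem_mk_right _ _⟩]

namespace SimpleGraph.Walk

theorem forall_mem_support_of_darts {P : V → Prop} {u v : V} (p : G.Walk u v) (hu : P u)
    (hstep : ∀ d ∈ p.darts, P d.fst → P d.snd) : ∀ w ∈ p.support, P w := by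
  induction p with
  | nil => simpa using hu
  | cons h r ih =>
    simp only [darts_cons, List.mem_cons, forall_eq_or_imp] at hstep
    simp only [support_cons, List.mem_cons, forall_eq_or_imp]
    exact ⟨hu, ih (hstep.1 hu) hstep.2⟩

theorem exists_mem_darts_snd_eq {u v w : V} (p : G.Walk u v) (hw : w ∈ p.support)
    (hne : w ≠ u) : ∃ d ∈ p.darts, d.snd = w := by
  rw [← cons_map_snd_darts, List.mem_cons] at hw
  simpa using hw.resolve_left hne

theorem exists_mem_darts_fst_eq {u v w : V} (p : G.Walk u v) (hw : w ∈ p.support)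
    (hne : w ≠ v) : ∃ d ∈ p.darts, d.fst = w := by
  rw [← map_fst_darts_append, List.mem_append, List.mem_singleton] at hw
  simpa using hw.resolve_right hne

/-- In a bipartite graph: `p` is `M`-alternating and its non-matching edges lead out of `A`.
Phrased dart by dart, so that it passes to sub-walks and shortcuts. -/
def AlternatesFromA (M : Set (Sym2 V)) (A : Set V) {u v : V} (p : G.Walk u v) : Prop :=
  ∀ d ∈ p.darts, d.edge ∈ M ↔ d.fst ∉ A

theorem alternatesFromA_of_head (hbip : IsBipartition G A B) :
    ∀ {u v : V} (p : G.Walk u v), AlternatingEdges M p.edges →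
      (∀ e ∈ p.edges.head?, e ∈ M ↔ u ∉ A) → p.AlternatesFromA M A
  | _, _, nil, _, _ => by simp [AlternatesFromA]
  | _, _, cons h r, halt, hhead => by
    rw [AlternatingEdges, edges_cons] at halt
    replace halt := List.isChain_cons.1 halt
    have hfirst := hhead _ rfl
    have hside := hbip.mem_left_iff_of_adj h
    intro d hd
    rw [darts_cons, List.mem_cons] at hd
    rcases hd with rfl | hd
    · exact hfirst
    · refine alternatesFromA_of_head hbip r halt.2 (fun e he => ?_) d hd
      have := halt.1 e he
      tauto

theorem alternatesFromA_of_alternatingEdges (hbip : IsBipartition G A B) {u v : V}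
    (p : G.Walk u v) (halt : AlternatingEdges M p.edges) (hus : ¬ MSaturated M u) (hu : u ∈ A) :
    p.AlternatesFromA M A := by
  refine alternatesFromA_of_head hbip p halt fun e he => ?_
  cases p with
  | nil => simp at he
  | cons h r =>
    obtain rfl : s(u, _) = e := by simpa using he
    exact iff_of_false (fun heM => hus ⟨_, heM, Sym2.mem_mk_left _ _⟩) (not_not.2 hu)

namespace AlternatesFromA

variable {u v : V} {p : G.Walk u v}

theorem alternatingEdges (hbip : IsBipartition G A B) (hp : p.AlternatesFromA M A) :
    AlternatingEdges M p.edges := by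
  refine (List.isChain_map _).2
    (p.isChain_dartAdj_darts.imp_of_mem_imp fun d d' hd hd' hdd' => ?_)
  rw [hp d hd, hp d' hd', ← hdd', hbip.mem_left_iff_of_adj d.adj]
  tauto

theorem _root_.onAltPath_iff (hbip : IsBipartition G A B) {e : Sym2 V} :
    OnAltPath G M A e ↔ ∃ (u z : V) (p : G.Walk u z),
      u ∈ A ∧ ¬ MSaturated M u ∧ p.IsPath ∧ p.AlternatesFromA M A ∧ e ∈ p.edges := by
  constructor
  · rintro ⟨u, z, p, hu, hus, hpath, halt, he⟩
    exact ⟨u, z, p, hu, hus, hpath, alternatesFromA_of_alternatingEdges hbip p halt hus hu, he⟩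
  · rintro ⟨u, z, p, hu, hus, hpath, hp, he⟩
    exact ⟨u, z, p, hu, hus, hpath, hp.alternatingEdges hbip, he⟩

theorem mono {u' v' : V} {q : G.Walk u' v'} (hp : p.AlternatesFromA M A)
    (hq : q.darts ⊆ p.darts) : q.AlternatesFromA M A :=
  fun d hd => hp d (hq hd)

theorem concat (hp : p.AlternatesFromA M A) {w : V} (h : G.Adj v w)
    (hvw : s(v, w) ∈ M ↔ v ∉ A) : (p.concat h).AlternatesFromA M A := by
  intro d hd
  rw [darts_concat, List.concat_eq_append, List.mem_append, List.mem_singleton] at hd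
  rcases hd with hd | rfl
  · exact hp d hd
  · exact hvw

theorem eq_or_exists_mem_edges (hbip : IsBipartition G A B) (hp : p.AlternatesFromA M A)
    {w : V} (hw : w ∈ p.support) : w = u ∨ w = v ∨ ∃ e ∈ p.edges, e ∈ M ∧ w ∈ e := by
  by_cases hwA : w ∈ A
  · refine or_iff_not_imp_left.2 fun hwu => Or.inr ?_
    obtain ⟨d, hd, rfl⟩ := p.exists_mem_darts_snd_eq hw hwu
    have hdM : d.edge ∈ M := (hp d hd).2 ((hbip.mem_left_iff_of_adj d.adj).1 hwA)
    exact ⟨d.edge, List.mem_map_of_mem hd, hdM, Sym2.mem_mk_right _ _⟩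
  · refine Or.inr (or_iff_not_imp_left.2 fun hwv => ?_)
    obtain ⟨d, hd, rfl⟩ := p.exists_mem_darts_fst_eq hw hwv
    exact ⟨d.edge, List.mem_map_of_mem hd, (hp d hd).2 hwA, Sym2.mem_mk_left _ _⟩

/-- Along a path, a vertex is left at most once and entered at most once, while every
non-matching edge is traversed from `A` to the other side. -/
theorem eq_of_notMem (hbip : IsBipartition G A B) (hp : p.AlternatesFromA M A)
    (hpath : p.IsPath) {e f : Sym2 V} (he : e ∈ p.edges) (hf : f ∈ p.edges) (heM : e ∉ M)
    (hfM : f ∉ M) {w : V} (hwe : w ∈ e) (hwf : w ∈ f) : e = f := by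
  obtain ⟨d, hd, rfl⟩ := List.mem_map.1 he
  obtain ⟨d', hd', rfl⟩ := List.mem_map.1 hf
  have hdA : d.fst ∈ A := not_not.1 fun h => heM ((hp d hd).2 h)
  have hd'A : d'.fst ∈ A := not_not.1 fun h => hfM ((hp d' hd').2 h)
  have hdB : d.snd ∉ A := fun h => (hbip.mem_left_iff_of_adj d.adj).1 h hdA
  have hd'B : d'.snd ∉ A := fun h => (hbip.mem_left_iff_of_adj d'.adj).1 h hd'A
  congr 1
  rcases Sym2.mem_iff.1 hwe with rfl | rfl <;> rcases Sym2.mem_iff.1 hwf with h | h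
  · refine List.inj_on_of_nodup_map (f := (·.fst)) ?_ hd hd' h
    rw [map_fst_darts]
    exact hpath.support_nodup.sublist (List.dropLast_sublist _)
  · exact absurd (h ▸ hdA) hd'B
  · exact absurd (h ▸ hd'A) hdB
  · refine List.inj_on_of_nodup_map (f := (·.snd)) ?_ hd hd' h
    rw [map_snd_darts]
    exact hpath.support_nodup.sublist (List.tail_sublist _)

/-- Shortcut the walk up to the matching edge: the edge is either already on the shortcut or
can be appended to it. -/
theorem onAltPath (hbip : IsBipartition G A B) (hM : IsMatching' G M)
    (hp : p.AlternatesFromA M A) (hu : u ∈ A) (hus : ¬ MSaturated M u) {e : Sym2 V}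
    (heM : e ∈ M) (he : e ∈ p.edges) : OnAltPath G M A e := by
  obtain ⟨d, hd, rfl⟩ := List.mem_map.1 he
  set q := (p.takeUntil d.fst (p.dart_fst_mem_support_of_mem_darts hd)).bypass
  have hq : q.AlternatesFromA M A :=
    hp.mono (List.Subset.trans (darts_bypass_subset_darts _) (darts_takeUntil_subset_darts _ _))
  by_cases hsnd : d.snd ∈ q.support
  · rcases hq.eq_or_exists_mem_edges hbip hsnd with h | h | ⟨f, hf, hfM, hdf⟩
    · exact absurd ⟨d.edge, heM, h ▸ Sym2.mem_mk_right _ _⟩ hus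
    · exact absurd h d.snd_ne_fst
    · rw [hM.eq_of_mem heM hfM (Sym2.mem_mk_right _ _) hdf]
      exact (onAltPath_iff hbip).2 ⟨u, _, q, hu, hus, bypass_isPath _, hq, hf⟩
  · refine (onAltPath_iff hbip).2 ⟨u, _, q.concat d.adj, hu, hus,
      (bypass_isPath _).concat hsnd d.adj, hq.concat d.adj (hp d hd), ?_⟩
    simp [edges_concat, Dart.edge]

theorem countP_notMem_eq (hbip : IsBipartition G A B) :
    ∀ {u v : V} {p : G.Walk u v}, p.AlternatesFromA M A → u ∈ A → v ∉ A →
      p.edges.countP (· ∉ M) = p.edges.countP (· ∈ M) + 1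
  | _, _, nil, _, hu, hv => absurd hu hv
  | u, _, cons (v := w) h nil, hp, hu, _ => by
    have huw : s(u, w) ∉ M := fun huw => (hp _ List.mem_cons_self).1 huw hu
    simp [huw]
  | u, _, cons (v := w) h (cons (v := x) h' r), hp, hu, hv => by
    have hw := (hbip.mem_left_iff_of_adj h.symm).1 hu
    have huw : s(u, w) ∉ M := fun huw => (hp _ List.mem_cons_self).1 huw hu
    have hwx : s(w, x) ∈ M := (hp _ (List.mem_cons_of_mem _ List.mem_cons_self)).2 hw
    have hr : r.AlternatesFromA M A := hp.mono (by simp)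
    have := countP_notMem_eq hbip hr ((hbip.mem_left_iff_of_adj h').2 hw) hv
    simp only [edges_cons, List.countP_cons, huw, hwx, this]
    simp

theorem mem_iff_notMem_left (hbip : IsBipartition G A B) {C : Set V}
    (hC : _root_.IsVertexCover G C) (hCM : ∀ ⦃x y : V⦄, s(x, y) ∈ M → x ∈ C → y ∉ C)
    (hp : p.AlternatesFromA M A) (hu : u ∈ A) (huC : u ∉ C) :
    ∀ w ∈ p.support, w ∈ C ↔ w ∉ A := by
  refine p.forall_mem_support_of_darts (iff_of_false huC (not_not.2 hu)) fun d hd hfst => ?_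
  have hside := hbip.mem_left_iff_of_adj d.adj
  by_cases hA : d.fst ∈ A
  · exact iff_of_true ((hC d.adj).resolve_left (hfst.not.2 (not_not.2 hA)))
      (hside.not.2 (not_not.2 hA))
  · exact iff_of_false (hCM ((hp d hd).2 hA) (hfst.2 hA)) (not_not.2 (hside.2 hA))

end AlternatesFromA

end SimpleGraph.Walk

open SimpleGraph Walk

theorem IsMatching'.symmDiff_edges (hbip : IsBipartition G A B) (hM : IsMatching' G M)
    {u v : V} {p : G.Walk u v} (hp : p.AlternatesFromA M A) (hpath : p.IsPath)
    (hus : ¬ MSaturated M u) (hvs : ¬ MSaturated M v) :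
    IsMatching' G (symmDiff M {e | e ∈ p.edges}) := by
  have hout : ∀ e ∈ M, e ∉ p.edges → ∀ w ∈ e, w ∉ p.support := by
    intro e heM hep w hwe hw
    rcases hp.eq_or_exists_mem_edges hbip hw with rfl | rfl | ⟨f, hf, hfM, hwf⟩
    · exact hus ⟨e, heM, hwe⟩
    · exact hvs ⟨e, heM, hwe⟩
    · exact hep (hM.eq_of_mem heM hfM hwe hwf ▸ hf)
  refine ⟨fun e he => ?_, fun e he f hf hef w hw => ?_⟩
  · rcases Set.mem_symmDiff.1 he with ⟨heM, -⟩ | ⟨hep, -⟩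
    exacts [hM.1 heM, p.edges_subset_edgeSet hep]
  obtain ⟨hwe, hwf⟩ := hw
  rcases Set.mem_symmDiff.1 he with ⟨heM, hep⟩ | ⟨hep, heM⟩ <;>
    rcases Set.mem_symmDiff.1 hf with ⟨hfM, hfp⟩ | ⟨hfp, hfM⟩
  · exact hM.2 e heM f hfM hef w ⟨hwe, hwf⟩
  · exact hout e heM hep w hwe (mem_support_of_mem_edges hfp hwf)
  · exact hout f hfM hfp w hwf (mem_support_of_mem_edges hep hwe)
  · exact hef (hp.eq_of_notMem hbip hpath hep hfp heM hfM hwe hwf)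

/-- Otherwise the symmetric difference of `M` with the shortcut `p.bypass` would be a larger
matching. -/
theorem IsMaxMatching.not_alternatesFromA [Finite V] (hbip : IsBipartition G A B)
    (hM : IsMaxMatching G M) {u v : V} (p : G.Walk u v) (hu : u ∈ A) (hv : v ∉ A)
    (hus : ¬ MSaturated M u) (hvs : ¬ MSaturated M v) : ¬ p.AlternatesFromA M A := by
  intro hp
  have hq := hp.mono (darts_bypass_subset_darts p)
  have hcard := p.bypass_isPath.isTrail.edges_nodup.ncard_symmDiff_add_countP (Set.toFinite M)
  rw [hq.countP_notMem_eq hbip hu hv] at hcard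
  have := hM.2 _ (hM.1.symmDiff_edges hbip hq p.bypass_isPath hus hvs)
  omega

def IsPartialTransversal (M : Set (Sym2 V)) (S : Set V) : Prop :=
  (∀ v ∈ S, MSaturated M v) ∧ ∀ ⦃x y : V⦄, s(x, y) ∈ M → x ∈ S → y ∉ S

theorem IsPartialTransversal.ncard_le_ncard [Finite V] {S : Set V}
    (hS : IsPartialTransversal M S) : S.ncard ≤ M.ncard := by
  refine Set.ncard_le_ncard_of_forall_subsingleton (Set.toFinite S) (Set.toFinite M)
    (fun v e => v ∈ e) hS.1 fun e he v hv w hw => by_contra fun hvw => ?_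
  obtain rfl := (Sym2.mem_and_mem_iff hvw).1 ⟨hv.2, hw.2⟩
  exact hS.2 he hv.1 hw.1

theorem IsVertexCover.isPartialTransversal_of_ncard_le [Finite V] (hM : IsMatching' G M)
    {S : Set V} (hS : _root_.IsVertexCover G S) (hle : S.ncard ≤ M.ncard) :
    IsPartialTransversal M S := by
  have hremove : ∀ v ∈ S, ¬ ∀ e ∈ M, ∃ w ∈ S \ {v}, w ∈ e := fun v hv h => by
    have := hM.ncard_le_ncard_of_forall_exists_mem h
    have := Set.ncard_sdiff_singleton_lt_of_mem hv
    omega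
  refine ⟨fun v hv => by_contra fun hvs => hremove v hv fun e he => ?_,
    fun x y hxy hx hy => hremove y hy fun e he => ?_⟩
  · obtain ⟨w, hw, hwe⟩ := hS.exists_mem (hM.1 he)
    exact ⟨w, ⟨hw, fun h => hvs ⟨e, he, h ▸ hwe⟩⟩, hwe⟩
  · by_cases hye : y ∈ e
    · rw [hM.eq_of_mem he hxy hye (Sym2.mem_mk_right _ _)]
      exact ⟨x, ⟨hx, (hM.1 hxy).ne⟩, Sym2.mem_mk_left _ _⟩
    · obtain ⟨w, hw, hwe⟩ := hS.exists_mem (hM.1 he)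
      exact ⟨w, ⟨hw, fun h => hye (h ▸ hwe)⟩, hwe⟩

theorem isPartialTransversal_koenigCoverFrom (hbip : IsBipartition G A B)
    (hM : IsMatching' G M) : IsPartialTransversal M (koenigCoverFrom G M A B) := by
  refine ⟨?_, fun x y hxy hx hy => ?_⟩
  · rintro v (⟨-, e, he, hv, -⟩ | ⟨-, e, he, hv, -⟩) <;> exact ⟨e, he, hv⟩
  have hside := hbip.mem_left_iff_of_adj (hM.1 hxy)
  have hmem : ∀ z ∈ s(x, y), z ∈ koenigCoverFrom G M A B →
      (z ∉ A ∧ OnAltPath G M A s(x, y)) ∨ (z ∈ A ∧ ¬ OnAltPath G M A s(x, y)) := by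
    rintro z hz (⟨hzB, e, he, hze, halt⟩ | ⟨hzA, e, he, hze, halt⟩) <;>
      rw [hM.eq_of_mem he hxy hze hz] at halt
    exacts [Or.inl ⟨hbip.notMem_left_iff.2 hzB, halt⟩, Or.inr ⟨hzA, halt⟩]
  rcases hmem x (Sym2.mem_mk_left _ _) hx with hx | hx <;>
    rcases hmem y (Sym2.mem_mk_right _ _) hy with hy | hy <;> tauto

theorem koenigCoverFrom_isVertexCover [Finite V] (hbip : IsBipartition G A B)
    (hM : IsMaxMatching G M) : _root_.IsVertexCover G (koenigCoverFrom G M A B) := by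
  suffices h : ∀ ⦃x y : V⦄, G.Adj x y → x ∈ A →
      x ∈ koenigCoverFrom G M A B ∨ y ∈ koenigCoverFrom G M A B by
    intro x y hxy
    by_cases hx : x ∈ A
    · exact h hxy hx
    · exact (h hxy.symm ((hbip.mem_left_iff_of_adj hxy).2 hx)).symm
  intro x y hxy hx
  by_contra! hout
  have hy : y ∉ A := (hbip.mem_left_iff_of_adj hxy.symm).1 hx
  have hxM : ∀ e ∈ M, x ∈ e → OnAltPath G M A e := fun e he hxe =>
    by_contra fun h => hout.1 (Or.inr ⟨hx, e, he, hxe, h⟩)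
  have hyM : ∀ e ∈ M, y ∈ e → ¬ OnAltPath G M A e := fun e he hye h =>
    hout.2 (Or.inl ⟨hbip.notMem_left_iff.1 hy, e, he, hye, h⟩)
  obtain ⟨u, q, hu, hus, hq⟩ : ∃ (u : V) (q : G.Walk u x), u ∈ A ∧ ¬ MSaturated M u ∧
      q.AlternatesFromA M A := by
    by_cases hxs : MSaturated M x
    · obtain ⟨e, he, hxe⟩ := hxs
      obtain ⟨u, z, p, hu, hus, -, hp, hep⟩ := (onAltPath_iff hbip).1 (hxM e he hxe)
      exact ⟨u, p.takeUntil x (p.mem_support_of_mem_edges hep hxe), hu, hus,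
        hp.mono (darts_takeUntil_subset_darts _ _)⟩
    · exact ⟨x, nil, hx, hxs, by simp [AlternatesFromA]⟩
  have hxyM : s(x, y) ∉ M := fun h =>
    hyM _ h (Sym2.mem_mk_right _ _) (hxM _ h (Sym2.mem_mk_left _ _))
  have hqy := hq.concat hxy (iff_of_false hxyM (not_not.2 hx))
  by_cases hys : MSaturated M y
  · obtain ⟨e, he, hye⟩ := hys
    obtain ⟨w, rfl⟩ := Sym2.mem_iff_exists.1 hye
    have hyw : G.Adj y w := hM.1.1 he
    have hqw := hqy.concat hyw (iff_of_true he hy)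
    exact hyM _ he hye (hqw.onAltPath hbip hM.1 hu hus he (by simp [edges_concat]))
  · exact hM.not_alternatesFromA hbip _ hu hy hus hys hqy

/-- For a finite bipartite graph `G` with bipartition `(A,B)` and
a maximum matching `M`, letting `C*` be the `A`-König cover of `G` constructed
from `M`, every minimum vertex cover `C'` of `G` satisfies `A ∩ C' ⊆ A ∩ C*`. -/
theorem inter_subset_koenigCoverFrom {V : Type} [Fintype V] (G : SimpleGraph V)
    (A B : Set V) (hbip : IsBipartition G A B)
    (M : Set (Sym2 V)) (hM : IsMaxMatching G M)
    (C' : Set V) (hC' : IsMinVertexCover G C') :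
    A ∩ C' ⊆ A ∩ koenigCoverFrom G M A B := by
  have hC'M : IsPartialTransversal M C' := hC'.1.isPartialTransversal_of_ncard_le hM.1 <|
    (hC'.2 _ (koenigCoverFrom_isVertexCover hbip hM)).trans
      (isPartialTransversal_koenigCoverFrom hbip hM.1).ncard_le_ncard
  rintro a ⟨ha, haC⟩
  obtain ⟨e, he, hae⟩ := hC'M.1 a haC
  refine ⟨ha, Or.inr ⟨ha, e, he, hae, fun halt => ?_⟩⟩
  obtain ⟨u, z, p, hu, hus, -, hp, hep⟩ := (onAltPath_iff hbip).1 halt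
  have huC : u ∉ C' := fun h => hus (hC'M.1 u h)
  exact (hp.mem_iff_notMem_left hbip hC'.1 hC'M.2 hu huC a
    (p.mem_support_of_mem_edges hep hae)).1 haC ha
end

section
/- Let G be a finite simple graph and let (A,B,X) be a partition of V(G) into three pairwise disjoint (possibly empty) sets. Let C_A be the A-König cover of the bipartite graph G[A, B ∪ X], and let C be any minimum vertex cover of the bipartite graph G[A ∪ X, B]. Then B ∩ C_A ⊆ B ∩ C. -/
open SimpleGraph

/-! Uncrossing. Put `D₁ = (C_A ∩ C) ∪ (C_A \ B) ∪ (C ∩ A)` and `D₂ = (C_A ∩ C) ∪ (C \ A) ∪ (C_A ∩ B)`: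
`D₁` keeps the `A`-part of `C_A ∪ C` and the `B`-part of `C_A ∩ C`, `D₂` the reverse. Then `D₁`
covers `G[A, B ∪ X]`, `D₂` covers `G[A ∪ X, B]`, and `|D₁| + |D₂| = |C_A| + |C|`, so both are
minimum covers. The König property of `C_A` applied to `D₁` gives `B ∩ C_A ⊆ D₁`, and
`B ∩ D₁ ⊆ C`. -/

theorem Set.ncard_add_ncard_eq_of_union_eq_of_inter_eq {α : Type*} {P Q S T : Set α}
    (hP : P.Finite) (hQ : Q.Finite) (hS : S.Finite) (hT : T.Finite)
    (hunion : S ∪ T = P ∪ Q) (hinter : S ∩ T = P ∩ Q) :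
    S.ncard + T.ncard = P.ncard + Q.ncard := by
  rw [← Set.ncard_union_add_ncard_inter S T hS hT, hunion, hinter,
    Set.ncard_union_add_ncard_inter P Q hP hQ]

/-- Each element lies in as many of the two new sets as of `P` and `Q`. -/
theorem Set.ncard_uncross_add_ncard_uncross {α : Type*} (P Q S T : Set α)
    (hP : P.Finite) (hQ : Q.Finite) :
    ((P ∩ Q) ∪ (P \ S) ∪ (Q ∩ T)).ncard + ((P ∩ Q) ∪ (Q \ T) ∪ (P ∩ S)).ncard =
      P.ncard + Q.ncard := by
  apply Set.ncard_add_ncard_eq_of_union_eq_of_inter_eq hP hQ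
  · exact ((hP.inter_of_left Q).union hP.sdiff).union (hQ.inter_of_left T)
  · exact ((hP.inter_of_left Q).union hQ.sdiff).union (hP.inter_of_left S)
  all_goals
    ext v
    simp only [Set.mem_union, Set.mem_inter_iff, Set.mem_sdiff]
    tauto

theorem isVertexCover_crossingGraph_iff {V : Type} {G : SimpleGraph V} {S T D : Set V} :
    _root_.IsVertexCover (crossingGraph G S T) D ↔
      ∀ ⦃u v : V⦄, G.Adj u v → u ∈ S → v ∈ T → u ∈ D ∨ v ∈ D := by
  refine ⟨fun hD u v huv hu hv => hD ⟨huv, Or.inl ⟨hu, hv⟩⟩, ?_⟩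
  rintro hD u v ⟨huv, ⟨hu, hv⟩ | ⟨hu, hv⟩⟩
  · exact hD huv hu hv
  · exact (hD huv.symm hv hu).symm

theorem IsMinVertexCover.of_ncard_add_le {V : Type} {G G' : SimpleGraph V}
    {C C' D D' : Set V} (hC : IsMinVertexCover G C) (hC' : IsMinVertexCover G' C')
    (hD : _root_.IsVertexCover G D) (hD' : _root_.IsVertexCover G' D')
    (hle : D.ncard + D'.ncard ≤ C.ncard + C'.ncard) : IsMinVertexCover G D := by
  refine ⟨hD, fun E hE => ?_⟩
  have := hC.2 E hE
  have := hC'.2 D' hD'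
  omega

section Uncrossing

variable {V : Type} {G : SimpleGraph V} {A B X CA C : Set V}

theorem isVertexCover_uncross_left (hAB : Disjoint A B) (hBX : Disjoint B X)
    (hCA : _root_.IsVertexCover (crossingGraph G A (B ∪ X)) CA)
    (hC : _root_.IsVertexCover (crossingGraph G (A ∪ X) B) C) :
    _root_.IsVertexCover (crossingGraph G A (B ∪ X)) ((CA ∩ C) ∪ (CA \ B) ∪ (C ∩ A)) := by
  rw [isVertexCover_crossingGraph_iff] at hCA hC ⊢
  intro u v huv hu hv
  rcases hCA huv hu hv with huCA | hvCA
  · exact Or.inl (Or.inl (Or.inr ⟨huCA, hAB.notMem_of_mem_left hu⟩))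
  rcases hv with hvB | hvX
  · rcases hC huv (Or.inl hu) hvB with huC | hvC
    · exact Or.inl (Or.inr ⟨huC, hu⟩)
    · exact Or.inr (Or.inl (Or.inl ⟨hvCA, hvC⟩))
  · exact Or.inr (Or.inl (Or.inr ⟨hvCA, hBX.notMem_of_mem_right hvX⟩))

theorem isVertexCover_uncross_right (hAB : Disjoint A B) (hAX : Disjoint A X)
    (hCA : _root_.IsVertexCover (crossingGraph G A (B ∪ X)) CA)
    (hC : _root_.IsVertexCover (crossingGraph G (A ∪ X) B) C) :
    _root_.IsVertexCover (crossingGraph G (A ∪ X) B) ((CA ∩ C) ∪ (C \ A) ∪ (CA ∩ B)) := by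
  rw [isVertexCover_crossingGraph_iff] at hCA hC ⊢
  intro u v huv hu hv
  rcases hC huv hu hv with huC | hvC
  · rcases hu with huA | huX
    · rcases hCA huv huA (Or.inl hv) with huCA | hvCA
      · exact Or.inl (Or.inl (Or.inl ⟨huCA, huC⟩))
      · exact Or.inr (Or.inr ⟨hvCA, hv⟩)
    · exact Or.inl (Or.inl (Or.inr ⟨huC, hAX.notMem_of_mem_right huX⟩))
  · exact Or.inr (Or.inl (Or.inr ⟨hvC, hAB.notMem_of_mem_right hv⟩))

end Uncrossing

theorem inter_B_koenig_subset_general {V : Type} [Fintype V] (G : SimpleGraph V)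
    (A B X : Set V)
    (hAB : Disjoint A B) (hAX : Disjoint A X) (hBX : Disjoint B X)
    (CA : Set V) (hCA : IsKoenigCover (crossingGraph G A (B ∪ X)) A (B ∪ X) CA)
    (C : Set V) (hC : IsMinVertexCover (crossingGraph G (A ∪ X) B) C) :
    B ∩ CA ⊆ B ∩ C := by
  obtain ⟨hCAmin, hCAkoenig⟩ := hCA
  have hmin : IsMinVertexCover (crossingGraph G A (B ∪ X)) ((CA ∩ C) ∪ (CA \ B) ∪ (C ∩ A)) :=
    hCAmin.of_ncard_add_le hC (isVertexCover_uncross_left hAB hBX hCAmin.1 hC.1)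
      (isVertexCover_uncross_right hAB hAX hCAmin.1 hC.1)
      (Set.ncard_uncross_add_ncard_uncross CA C B A (Set.toFinite _) (Set.toFinite _)).le
  rintro v ⟨hvB, hvCA⟩
  obtain ⟨-, hv⟩ := (hCAkoenig _ hmin).2 ⟨Or.inl hvB, hvCA⟩
  refine ⟨hvB, ?_⟩
  rcases hv with (⟨-, hvC⟩ | ⟨-, hvnB⟩) | ⟨hvC, -⟩
  · exact hvC
  · exact absurd hvB hvnB
  · exact hvC

/-- For a tripartition `(A,B,X)` of the vertices of `G`, the
`A`-König cover `C_A` of `G[A, B ∪ X]` and any minimum vertex cover `C` of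
`G[A ∪ X, B]` satisfy `B ∩ C_A ⊆ B ∩ C`. -/
theorem inter_B_koenig_subset {V : Type} [Fintype V] (G : SimpleGraph V)
    (A B X : Set V)
    (hAB : Disjoint A B) (hAX : Disjoint A X) (hBX : Disjoint B X)
    (hU : A ∪ B ∪ X = Set.univ)
    (CA : Set V) (hCA : IsKoenigCover (crossingGraph G A (B ∪ X)) A (B ∪ X) CA)
    (C : Set V) (hC : IsMinVertexCover (crossingGraph G (A ∪ X) B) C) :
    B ∩ CA ⊆ B ∩ C :=
  inter_B_koenig_subset_general G A B X hAB hAX hBX CA hCA C hC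
end

section
/- Let G be a finite simple graph whose vertex set is partitioned into disjoint sets A, B, and {x}. Let C' be the A-König cover of the bipartite graph G[A, B] and let C_A be the A-König cover of the bipartite graph G[A, B ∪ {x}]. Then A ∩ C' ⊆ A ∩ C_A. -/
open SimpleGraph

/-!
Write `G₁ = G[A, B]` and `G₂ = G[A, B ∪ {x}]`. Since `G₁ ≤ G₂` and adding `x` to a cover of `G₁`
covers `G₂`, the cover numbers satisfy `τ₁ ≤ τ₂ ≤ τ₁ + 1`. If `τ₂ = τ₁ + 1`, then `C' ∪ {x}` is a
minimum cover of `G₂`, and the König property of `C_A` gives the claim. If `τ₂ = τ₁`, then `C_A` is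
a minimum cover of `G₁` avoiding the isolated vertex `x`, so `A ∩ C_A ⊆ C'`; hence `C'` already
covers every edge `ax` of `G₂`, is a minimum cover of `G₂`, and the König property of `C_A` applies.
-/

section VertexCover

variable {V : Type} {G H : SimpleGraph V} {C D : Set V} {v : V}

theorem IsVertexCover.of_le (hGH : G ≤ H) (hC : _root_.IsVertexCover H C) :
    _root_.IsVertexCover G C :=
  fun _ _ huv => hC (hGH huv)

theorem IsVertexCover.diff_singleton_of_forall_not_adj (hC : _root_.IsVertexCover G C)
    (hv : ∀ w, ¬ G.Adj v w) : _root_.IsVertexCover G (C \ {v}) := by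
  intro u w huw
  rcases hC huw with hu | hw
  · exact Or.inl ⟨hu, by rintro rfl; exact hv w huw⟩
  · exact Or.inr ⟨hw, by rintro rfl; exact hv u huw.symm⟩

theorem IsMinVertexCover.of_isVertexCover_of_ncard_le (hC : IsMinVertexCover G C)
    (hD : _root_.IsVertexCover G D) (hDC : D.ncard ≤ C.ncard) : IsMinVertexCover G D :=
  ⟨hD, fun E hE => hDC.trans (hC.2 E hE)⟩

theorem IsMinVertexCover.notMem_of_forall_not_adj [Finite V] (hC : IsMinVertexCover G C)
    (hv : ∀ w, ¬ G.Adj v w) : v ∉ C := fun hvC =>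
  (Set.ncard_sdiff_singleton_lt_of_mem hvC).not_ge
    (hC.2 _ (hC.1.diff_singleton_of_forall_not_adj hv))

end VertexCover

section CrossingGraph

variable {V : Type} {G : SimpleGraph V} {S T U C : Set V}

theorem crossingGraph_mono_right (hTU : T ⊆ U) : crossingGraph G S T ≤ crossingGraph G S U :=
  fun _ _ ⟨huv, h⟩ => ⟨huv, h.imp (And.imp_right (@hTU _)) (And.imp_left (@hTU _))⟩

theorem crossingGraph_not_adj_of_notMem {x : V} (hxS : x ∉ S) (hxT : x ∉ T) (w : V) :
    ¬ (crossingGraph G S T).Adj x w := by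
  rintro ⟨-, ⟨hx, -⟩ | ⟨hx, -⟩⟩
  exacts [hxS hx, hxT hx]

theorem crossingGraph_union_adj {u v : V} (huv : (crossingGraph G S (T ∪ U)).Adj u v) :
    (crossingGraph G S T).Adj u v ∨ (u ∈ S ∧ v ∈ U ∧ G.Adj u v) ∨ (v ∈ S ∧ u ∈ U ∧ G.Adj v u) := by
  obtain ⟨hG, ⟨hu, hv | hv⟩ | ⟨hu | hu, hv⟩⟩ := huv
  · exact Or.inl ⟨hG, Or.inl ⟨hu, hv⟩⟩
  · exact Or.inr (Or.inl ⟨hu, hv, hG⟩)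
  · exact Or.inl ⟨hG, Or.inr ⟨hu, hv⟩⟩
  · exact Or.inr (Or.inr ⟨hv, hu, hG.symm⟩)

theorem IsVertexCover.union_crossingGraph_union
    (hC : _root_.IsVertexCover (crossingGraph G S T) C) :
    _root_.IsVertexCover (crossingGraph G S (T ∪ U)) (C ∪ U) := by
  intro u v huv
  rcases crossingGraph_union_adj huv with h | ⟨-, hv, -⟩ | ⟨-, hu, -⟩
  · exact (hC h).imp Or.inl Or.inl
  · exact Or.inr (Or.inr hv)
  · exact Or.inl (Or.inr hu)

theorem IsVertexCover.crossingGraph_union (hC : _root_.IsVertexCover (crossingGraph G S T) C)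
    (hU : ∀ s ∈ S, ∀ u ∈ U, G.Adj s u → s ∈ C) :
    _root_.IsVertexCover (crossingGraph G S (T ∪ U)) C := by
  intro u v huv
  rcases crossingGraph_union_adj huv with h | ⟨hu, hv, hG⟩ | ⟨hv, hu, hG⟩
  · exact hC h
  · exact Or.inl (hU u hu v hv hG)
  · exact Or.inr (hU v hv u hu hG)

end CrossingGraph

theorem single_koenig_A_subset_general {V : Type} [Fintype V] (G : SimpleGraph V)
    (A B : Set V) (x : V)
    (hxA : x ∉ A) (hxB : x ∉ B)
    (C' : Set V) (hC' : IsKoenigCover (crossingGraph G A B) A B C')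
    (CA : Set V)
    (hCA : IsKoenigCover (crossingGraph G A (B ∪ {x})) A (B ∪ {x}) CA) :
    A ∩ C' ⊆ A ∩ CA := by
  set G₁ := crossingGraph G A B
  set G₂ := crossingGraph G A (B ∪ {x})
  have hx : ∀ w, ¬ G₁.Adj x w := crossingGraph_not_adj_of_notMem hxA hxB
  have hG₁₂ : G₁ ≤ G₂ := crossingGraph_mono_right Set.subset_union_left
  have hC'x : _root_.IsVertexCover G₂ (C' ∪ {x}) := hC'.1.1.union_crossingGraph_union
  have hC'x_card : (C' ∪ {x}).ncard = C'.ncard + 1 := by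
    rw [Set.union_singleton, Set.ncard_insert_of_notMem (hC'.1.notMem_of_forall_not_adj hx)]
  rcases (hCA.1.2 _ hC'x).lt_or_eq with hlt | heq
  · have hCA₁ : IsMinVertexCover G₁ CA :=
      hC'.1.of_isVertexCover_of_ncard_le (hCA.1.1.of_le hG₁₂) (by omega)
    have hxCA : x ∉ CA := hCA₁.notMem_of_forall_not_adj hx
    have hCAC' : A ∩ CA ⊆ A ∩ C' := (hC'.2 CA hCA₁).1
    have hC'₂ : _root_.IsVertexCover G₂ C' := hC'.1.1.crossingGraph_union fun a ha u hu hau => by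
      obtain rfl : u = x := hu
      exact (hCAC' ⟨ha, (hCA.1.1 ⟨hau, Or.inl ⟨ha, Or.inr rfl⟩⟩).resolve_right hxCA⟩).2
    exact (hCA.2 C' (hCA.1.of_isVertexCover_of_ncard_le hC'₂ (hC'.1.2 CA hCA₁.1))).1
  · have hC'xCA := (hCA.2 _ (hCA.1.of_isVertexCover_of_ncard_le hC'x heq.ge)).1
    exact fun a ha => hC'xCA ⟨ha.1, Or.inl ha.2⟩

/-- For a partition of the vertices of `G` into `A`, `B` and
`{x}`, the `A`-König cover `C'` of `G[A, B]` and the `A`-König cover `C_A` of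
`G[A, B ∪ {x}]` satisfy `A ∩ C' ⊆ A ∩ C_A`. -/
theorem single_koenig_A_subset {V : Type} [Fintype V] (G : SimpleGraph V)
    (A B : Set V) (x : V)
    (hAB : Disjoint A B) (hxA : x ∉ A) (hxB : x ∉ B)
    (hU : A ∪ B ∪ {x} = Set.univ)
    (C' : Set V) (hC' : IsKoenigCover (crossingGraph G A B) A B C')
    (CA : Set V)
    (hCA : IsKoenigCover (crossingGraph G A (B ∪ {x})) A (B ∪ {x}) CA) :
    A ∩ C' ⊆ A ∩ CA :=
  single_koenig_A_subset_general G A B x hxA hxB C' hC' CA hCA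
end

section
/- Let G be a finite simple graph and let S ⊆ S' ⊆ V(G). Let C_S be the S-König cover of the bipartite graph G[S, V(G)∖S] and let C_{S'} be the S'-König cover of the bipartite graph G[S', V(G)∖S']. Then S ∩ C_{S'} ⊆ C_S and C_S ∖ S' ⊆ C_{S'}. -/
open SimpleGraph

/-!
Uncross the two covers. On the regions `S`, `S' \ S`, `V \ S'` take
`D := CS ∪ CS'`, `CS`, `CS ∩ CS'` and `D' := CS ∩ CS'`, `CS'`, `CS ∪ CS'` respectively.
Then `D` covers `G[S, Sᶜ]`, `D'` covers `G[S', S'ᶜ]` and `|D| + |D'| ≤ |CS| + |CS'|`, so `D` is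
again a minimum cover of `G[S, Sᶜ]`. Extremality of the `S`-König cover `CS` now gives
`S ∩ D ⊆ CS` and `CS \ S ⊆ D`, which are the two claims.
-/

theorem Set.ncard_add_ncard_le_of_union_subset_of_inter_subset {α : Type*}
    {A B C D : Set α} (hC : C.Finite) (hD : D.Finite)
    (hunion : A ∪ B ⊆ C ∪ D) (hinter : A ∩ B ⊆ C ∩ D) :
    A.ncard + B.ncard ≤ C.ncard + D.ncard := by
  have hCD : (C ∪ D).Finite := hC.union hD
  have hA : A.Finite := hCD.subset (Set.subset_union_left.trans hunion)
  have hB : B.Finite := hCD.subset (Set.subset_union_right.trans hunion)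
  rw [← Set.ncard_union_add_ncard_inter A B hA hB, ← Set.ncard_union_add_ncard_inter C D hC hD]
  exact add_le_add (Set.ncard_le_ncard hunion hCD) (Set.ncard_le_ncard hinter (hC.inter_of_left D))

theorem IsMinVertexCover.of_union_subset_of_inter_subset {V : Type} {G H : SimpleGraph V}
    {C C' D D' : Set V} (hC : IsMinVertexCover G C) (hC' : IsMinVertexCover H C')
    (hCfin : C.Finite) (hC'fin : C'.Finite)
    (hD : _root_.IsVertexCover G D) (hD' : _root_.IsVertexCover H D')
    (hunion : D ∪ D' ⊆ C ∪ C') (hinter : D ∩ D' ⊆ C ∩ C') :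
    IsMinVertexCover G D := by
  have hsum := Set.ncard_add_ncard_le_of_union_subset_of_inter_subset hCfin hC'fin hunion hinter
  have hC'D' := hC'.2 D' hD'
  exact ⟨hD, fun E hE => (by omega : D.ncard ≤ C.ncard).trans (hC.2 E hE)⟩

theorem isVertexCover_crossingGraph_compl_iff {V : Type} {G : SimpleGraph V} {S C : Set V} :
    _root_.IsVertexCover (crossingGraph G S Sᶜ) C ↔
      ∀ ⦃u v : V⦄, G.Adj u v → u ∈ S → v ∉ S → u ∈ C ∨ v ∈ C := by
  refine ⟨fun h u v huv hu hv => h ⟨huv, Or.inl ⟨hu, hv⟩⟩, ?_⟩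
  rintro h u v ⟨huv, ⟨hu, hv⟩ | ⟨hu, hv⟩⟩
  · exact h huv hu hv
  · exact (h huv.symm hv hu).symm

section Uncrossing

variable {V : Type} {G : SimpleGraph V} {S S' C C' : Set V}

theorem isVertexCover_uncross_left_s11 (hSS' : S ⊆ S')
    (hC : _root_.IsVertexCover (crossingGraph G S Sᶜ) C)
    (hC' : _root_.IsVertexCover (crossingGraph G S' S'ᶜ) C') :
    _root_.IsVertexCover (crossingGraph G S Sᶜ) (C ∩ (C' ∪ S') ∪ C' ∩ S) := by
  rw [isVertexCover_crossingGraph_compl_iff] at hC hC' ⊢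
  intro u v huv hu hv
  rcases hC huv hu hv with huC | hvC
  · exact Or.inl (Or.inl ⟨huC, Or.inr (hSS' hu)⟩)
  by_cases hvS' : v ∈ S'
  · exact Or.inr (Or.inl ⟨hvC, Or.inr hvS'⟩)
  rcases hC' huv (hSS' hu) hvS' with huC' | hvC'
  · exact Or.inl (Or.inr ⟨huC', hu⟩)
  · exact Or.inr (Or.inl ⟨hvC, Or.inl hvC'⟩)

theorem isVertexCover_uncross_right_s11 (hSS' : S ⊆ S')
    (hC : _root_.IsVertexCover (crossingGraph G S Sᶜ) C)
    (hC' : _root_.IsVertexCover (crossingGraph G S' S'ᶜ) C') :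
    _root_.IsVertexCover (crossingGraph G S' S'ᶜ) (C' ∩ (C ∪ Sᶜ) ∪ C \ S') := by
  rw [isVertexCover_crossingGraph_compl_iff] at hC hC' ⊢
  intro u v huv hu hv
  have hvS : v ∉ S := fun h => hv (hSS' h)
  rcases hC' huv hu hv with huC' | hvC'
  · by_cases huS : u ∈ S
    · rcases hC huv huS hvS with huC | hvC
      · exact Or.inl (Or.inl ⟨huC', Or.inl huC⟩)
      · exact Or.inr (Or.inr ⟨hvC, hv⟩)
    · exact Or.inl (Or.inl ⟨huC', Or.inr huS⟩)
  · exact Or.inr (Or.inl ⟨hvC', Or.inr hvS⟩)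

theorem uncross_union_subset :
    (C ∩ (C' ∪ S') ∪ C' ∩ S) ∪ (C' ∩ (C ∪ Sᶜ) ∪ C \ S') ⊆ C ∪ C' := by
  intro v
  simp only [Set.mem_union, Set.mem_inter_iff, Set.mem_sdiff, Set.mem_compl_iff]
  tauto

theorem uncross_inter_subset (hSS' : S ⊆ S') :
    (C ∩ (C' ∪ S') ∪ C' ∩ S) ∩ (C' ∩ (C ∪ Sᶜ) ∪ C \ S') ⊆ C ∩ C' := by
  intro v
  have := @hSS' v
  simp only [Set.mem_union, Set.mem_inter_iff, Set.mem_sdiff, Set.mem_compl_iff]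
  tauto

end Uncrossing

/-- For `S ⊆ S' ⊆ V(G)`, the `S`-König cover `C_S` of
`G[S, V(G)∖S]` and the `S'`-König cover `C_{S'}` of `G[S', V(G)∖S']` satisfy
`S ∩ C_{S'} ⊆ C_S` and `C_S ∖ S' ⊆ C_{S'}`. -/
theorem nested_koenig_monotone {V : Type} [Fintype V] (G : SimpleGraph V)
    (S S' : Set V) (hSS' : S ⊆ S')
    (CS : Set V) (hCS : IsKoenigCover (crossingGraph G S Sᶜ) S Sᶜ CS)
    (CS' : Set V) (hCS' : IsKoenigCover (crossingGraph G S' S'ᶜ) S' S'ᶜ CS') :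
    S ∩ CS' ⊆ CS ∧ CS \ S' ⊆ CS' := by
  have hD : IsMinVertexCover (crossingGraph G S Sᶜ) (CS ∩ (CS' ∪ S') ∪ CS' ∩ S) :=
    hCS.1.of_union_subset_of_inter_subset hCS'.1 (Set.toFinite CS) (Set.toFinite CS')
      (isVertexCover_uncross_left_s11 hSS' hCS.1.1 hCS'.1.1)
      (isVertexCover_uncross_right_s11 hSS' hCS.1.1 hCS'.1.1)
      uncross_union_subset (uncross_inter_subset hSS')
  obtain ⟨hSD, hCD⟩ := hCS.2 _ hD
  refine ⟨fun v hv => (hSD ⟨hv.1, Or.inr ⟨hv.2, hv.1⟩⟩).2, fun v ⟨hvC, hvS'⟩ => ?_⟩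
  rcases (hCD ⟨fun hvS => hvS' (hSS' hvS), hvC⟩).2 with ⟨-, hv | hv⟩ | ⟨-, hvS⟩
  · exact hv
  · exact absurd hv hvS'
  · exact absurd (hSS' hvS) hvS'
end

section
/- Let G be a finite connected simple graph and (T,δ) a rooted branch decomposition over V(G). For each node u of T let C_u denote the δ(u)-König cover of the bipartite graph G[δ(u), V(G)∖δ(u)]. Then for any node v of T, letting 𝒞 be the set of descendants of v in T (including v), one has (⋃_{x ∈ V(T)∖𝒞} C_x) ∩ (⋃_{x ∈ 𝒞} C_x) ⊆ C_v. -/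
open SimpleGraph

/-- A rooted branch decomposition over `V`: obtained from a branch decomposition
(a tree of maximum degree 3 with a bijection from its leaves to `V`) by
subdividing an edge and taking the new vertex as the root; hence a tree of
maximum degree 3 whose root has degree exactly 2, with a bijection from the
leaves (degree-1 vertices) to `V`. -/
structure RootedBranchDecomp (V N : Type) where
  tree : SimpleGraph N
  isTree : tree.IsTree
  root : N
  deg_le : ∀ x : N, (tree.neighborSet x).ncard ≤ 3
  root_deg : (tree.neighborSet root).ncard = 2
  leafEquiv : {x : N // (tree.neighborSet x).ncard = 1} ≃ V

/-- `u` is a descendant of `v` (equivalently `v` is an ancestor of `u`): `v` lies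
on the (unique) path from the root to `u`. -/
def RootedBranchDecomp.Desc {V N : Type} (D : RootedBranchDecomp V N)
    (v u : N) : Prop :=
  ∃ p : D.tree.Walk D.root u, p.IsPath ∧ v ∈ p.support

/-- `δ(u)`: the set of elements of `V` mapped from the leaves of the tree that
are descendants of `u`. -/
def RootedBranchDecomp.vertsBelow {V N : Type} (D : RootedBranchDecomp V N)
    (u : N) : Set V :=
  {g : V | D.Desc u (D.leafEquiv.symm g : N)}


/-! Let `S = δ(v)`. For `w ∈ C_x ∩ C_y` with `x` outside and `y` inside the subtree at `v`,
the sets `δ(·)` are laminar, so `δ(x)` either contains `S` or is disjoint from it, while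
`δ(y) ⊆ S`. In each case two cuts `G[A, Aᶜ]`, `G[B, Bᶜ]` with `A ∩ B = ∅` are in play, and
minimum covers `P`, `Q` of them can be *uncrossed*: taking `P ∪ Q` on `A`, `P ∩ Q` on `B`
and `P` elsewhere gives a cover of `G[A, Aᶜ]`, symmetrically one of `G[B, Bᶜ]`, and the two
new sets have the same union and intersection as `P` and `Q`, hence total size `|P| + |Q|`;
so both are again minimum. The extremality of the König cover then forces `w ∈ C_v`. -/

lemma crossingGraph_comm {V : Type} (G : SimpleGraph V) (S T : Set V) :
    crossingGraph G S T = crossingGraph G T S := by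
  ext u v
  simp only [crossingGraph]
  tauto

section Uncross

variable {V : Type} {A B P Q : Set V}

def uncross (A B P Q : Set V) : Set V :=
  A.ite (P ∪ Q) (B.ite (P ∩ Q) P)

lemma mem_uncross_of_mem_left {w : V} (hw : w ∈ A) : w ∈ uncross A B P Q ↔ w ∈ P ∪ Q := by
  simp [uncross, Set.ite, hw]

lemma mem_uncross_of_mem_right (hAB : Disjoint A B) {w : V} (hw : w ∈ B) :
    w ∈ uncross A B P Q ↔ w ∈ P ∩ Q := by
  simp [uncross, Set.ite, hw, Set.disjoint_right.mp hAB hw]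

lemma mem_uncross_of_notMem {w : V} (hA : w ∉ A) (hB : w ∉ B) :
    w ∈ uncross A B P Q ↔ w ∈ P := by
  simp [uncross, Set.ite, hA, hB]

lemma uncross_union_uncross (hAB : Disjoint A B) :
    uncross A B P Q ∪ uncross B A Q P = P ∪ Q := by
  ext w
  simp only [uncross, Set.ite, Set.mem_union, Set.mem_inter_iff, Set.mem_sdiff]
  have : w ∈ A → w ∉ B := fun h => Set.disjoint_left.mp hAB h
  tauto

lemma uncross_inter_uncross (hAB : Disjoint A B) :
    uncross A B P Q ∩ uncross B A Q P = P ∩ Q := by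
  ext w
  simp only [uncross, Set.ite, Set.mem_union, Set.mem_inter_iff, Set.mem_sdiff]
  have : w ∈ A → w ∉ B := fun h => Set.disjoint_left.mp hAB h
  tauto

lemma ncard_uncross_add_ncard_uncross [Finite V] (hAB : Disjoint A B) :
    (uncross A B P Q).ncard + (uncross B A Q P).ncard = P.ncard + Q.ncard := by
  rw [← Set.ncard_union_add_ncard_inter, uncross_union_uncross hAB,
    uncross_inter_uncross hAB, Set.ncard_union_add_ncard_inter]

variable {G : SimpleGraph V}

lemma isVertexCover_uncross (hAB : Disjoint A B)
    (hP : _root_.IsVertexCover (crossingGraph G A Aᶜ) P)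
    (hQ : _root_.IsVertexCover (crossingGraph G B Bᶜ) Q) :
    _root_.IsVertexCover (crossingGraph G A Aᶜ) (uncross A B P Q) := by
  suffices key : ∀ ⦃a b : V⦄, G.Adj a b → a ∈ A → b ∉ A →
      a ∈ uncross A B P Q ∨ b ∈ uncross A B P Q by
    rintro a b ⟨hab, ⟨ha, hb⟩ | ⟨ha, hb⟩⟩
    exacts [key hab ha hb, (key hab.symm hb ha).symm]
  intro a b hab ha hb
  rw [mem_uncross_of_mem_left ha]
  rcases hP ⟨hab, Or.inl ⟨ha, hb⟩⟩ with haP | hbP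
  · exact Or.inl (Or.inl haP)
  by_cases hbB : b ∈ B
  · rw [mem_uncross_of_mem_right hAB hbB]
    rcases hQ ⟨hab, Or.inr ⟨Set.disjoint_left.mp hAB ha, hbB⟩⟩ with haQ | hbQ
    exacts [Or.inl (Or.inr haQ), Or.inr ⟨hbP, hbQ⟩]
  · exact Or.inr ((mem_uncross_of_notMem hb hbB).mpr hbP)

lemma isMinVertexCover_uncross [Finite V] (hAB : Disjoint A B)
    (hP : IsMinVertexCover (crossingGraph G A Aᶜ) P)
    (hQ : IsMinVertexCover (crossingGraph G B Bᶜ) Q) :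
    IsMinVertexCover (crossingGraph G A Aᶜ) (uncross A B P Q) := by
  have hcover := isVertexCover_uncross hAB hP.1 hQ.1
  have hcover' := isVertexCover_uncross hAB.symm hQ.1 hP.1
  have hcard := ncard_uncross_add_ncard_uncross (P := P) (Q := Q) hAB
  have hP_le := hP.2 _ hcover
  have hQ_le := hQ.2 _ hcover'
  exact ⟨hcover, fun C' hC' => by have := hP.2 C' hC'; omega⟩

end Uncross

namespace IsKoenigCover

variable {V : Type} [Finite V] {G : SimpleGraph V} {A B K Q : Set V}

lemma inter_minCover_subset (hK : IsKoenigCover (crossingGraph G A Aᶜ) A Aᶜ K)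
    (hAB : Disjoint A B) (hQ : IsMinVertexCover (crossingGraph G B Bᶜ) Q) :
    A ∩ Q ⊆ K := fun _ ⟨hwA, hwQ⟩ =>
  ((hK.2 _ (isMinVertexCover_uncross hAB hK.1 hQ)).1
    ⟨hwA, (mem_uncross_of_mem_left hwA).mpr (Or.inr hwQ)⟩).2

lemma inter_subset_minCover (hK : IsKoenigCover (crossingGraph G A Aᶜ) A Aᶜ K)
    (hAB : Disjoint A B) (hQ : IsMinVertexCover (crossingGraph G B Bᶜ) Q) :
    B ∩ K ⊆ Q := fun w ⟨hwB, hwK⟩ =>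
  have hwA : w ∉ A := Set.disjoint_right.mp hAB hwB
  ((mem_uncross_of_mem_right hAB hwB).mp
    ((hK.2 _ (isMinVertexCover_uncross hAB hK.1 hQ)).2 ⟨hwA, hwK⟩).2).2

end IsKoenigCover

namespace RootedBranchDecomp

variable {V N : Type} (D : RootedBranchDecomp V N)

lemma desc_trans {v y u : N} (hvy : D.Desc v y) (hyu : D.Desc y u) : D.Desc v u := by
  classical
  obtain ⟨q, hq, hvq⟩ := hvy
  obtain ⟨p, hp, hyp⟩ := hyu
  have hqp : q = p.takeUntil y hyp :=
    (D.isTree.existsUnique_path D.root y).unique hq (hp.takeUntil hyp)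
  exact ⟨p, hp, p.support_takeUntil_subset_support hyp (hqp ▸ hvq)⟩

lemma desc_or_desc_of_desc {x v l : N} (hxl : D.Desc x l) (hvl : D.Desc v l) :
    D.Desc x v ∨ D.Desc v x := by
  classical
  obtain ⟨p, hp, hxp⟩ := hxl
  obtain ⟨p', hp', hvp'⟩ := hvl
  obtain rfl : p' = p := (D.isTree.existsUnique_path D.root l).unique hp' hp
  rcases List.prefix_or_prefix_of_prefix (p'.support_takeUntil_prefix_support hxp)
      (p'.support_takeUntil_prefix_support hvp') with h | h
  · exact Or.inl ⟨p'.takeUntil v hvp', hp.takeUntil hvp', h.subset (Walk.end_mem_support _)⟩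
  · exact Or.inr ⟨p'.takeUntil x hxp, hp.takeUntil hxp, h.subset (Walk.end_mem_support _)⟩

variable {D}

lemma vertsBelow_subset_of_desc {v y : N} (h : D.Desc v y) : D.vertsBelow y ⊆ D.vertsBelow v :=
  fun _ hg => D.desc_trans h hg

lemma vertsBelow_subset_or_disjoint {v x : N} (h : ¬ D.Desc v x) :
    D.vertsBelow v ⊆ D.vertsBelow x ∨ Disjoint (D.vertsBelow v) (D.vertsBelow x) := by
  refine or_iff_not_imp_right.mpr fun hnd => ?_
  obtain ⟨g, hgv, hgx⟩ := Set.not_disjoint_iff.mp hnd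
  exact vertsBelow_subset_of_desc ((D.desc_or_desc_of_desc hgx hgv).resolve_right h)

end RootedBranchDecomp

theorem koenig_descendant_union_general {V N : Type} [Fintype V]
    (G : SimpleGraph V)
    (D : RootedBranchDecomp V N) (C : N → Set V)
    (hC : ∀ u : N, IsKoenigCover
      (crossingGraph G (D.vertsBelow u) (D.vertsBelow u)ᶜ)
      (D.vertsBelow u) (D.vertsBelow u)ᶜ (C u))
    (v : N) :
    (⋃ x ∈ {x : N | ¬ D.Desc v x}, C x) ∩ (⋃ x ∈ {x : N | D.Desc v x}, C x)
      ⊆ C v := by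
  have minCover_compl : ∀ u, IsMinVertexCover
      (crossingGraph G (D.vertsBelow u)ᶜ (D.vertsBelow u)ᶜᶜ) (C u) := fun u => by
    rw [compl_compl, crossingGraph_comm]
    exact (hC u).1
  rintro w ⟨hw_out, hw_in⟩
  simp only [Set.mem_iUnion, Set.mem_ofPred_eq, exists_prop] at hw_out hw_in
  obtain ⟨x, hx, hwx⟩ := hw_out
  obtain ⟨y, hy, hwy⟩ := hw_in
  by_cases hwv : w ∈ D.vertsBelow v
  · rcases RootedBranchDecomp.vertsBelow_subset_or_disjoint hx with hsub | hdisj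
    · exact (hC v).inter_minCover_subset (Set.disjoint_compl_right_iff_subset.mpr hsub)
        (minCover_compl x) ⟨hwv, hwx⟩
    · exact (hC v).inter_minCover_subset hdisj (hC x).1 ⟨hwv, hwx⟩
  · exact (hC y).inter_subset_minCover
      (Set.disjoint_compl_right_iff_subset.mpr (RootedBranchDecomp.vertsBelow_subset_of_desc hy))
      (minCover_compl v) ⟨hwv, hwy⟩

/-- For a connected graph `G` and rooted branch decomposition
`(T,δ)` over `V(G)`, where `C_u` is the `δ(u)`-König cover of
`G[δ(u), V(G)∖δ(u)]` for each node `u`, for any node `v` with `𝒞` its set of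
descendants (including `v` itself) we have
`(⋃_{x ∉ 𝒞} C_x) ∩ (⋃_{x ∈ 𝒞} C_x) ⊆ C_v`. -/
theorem koenig_descendant_union {V N : Type} [Fintype V] [Fintype N]
    (G : SimpleGraph V) (hG : G.Connected)
    (D : RootedBranchDecomp V N) (C : N → Set V)
    (hC : ∀ u : N, IsKoenigCover
      (crossingGraph G (D.vertsBelow u) (D.vertsBelow u)ᶜ)
      (D.vertsBelow u) (D.vertsBelow u)ᶜ (C u))
    (v : N) :
    (⋃ x ∈ {x : N | ¬ D.Desc v x}, C x) ∩ (⋃ x ∈ {x : N | D.Desc v x}, C x)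
      ⊆ C v :=
  koenig_descendant_union_general G D C hC v
end
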